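/- arXiv:1502.06149 — 4 statements merged into one kernel-verified Lean document; each statement's English description precedes it below -/
import Mathlib

section
/- Let f: 2^M → ℤ be an intersecting submodular function with f(∅)=0 on a finite set M. Define g(S) = min over partitions P of S of Σ_{V∈P} f(V) (the Dilworth truncation). Then g is fully submodular and the polyhedra coincide: { R : R(S) ≤ f(S) for all S ⊆ M } = { R : R(S) ≤ g(S) for all S ⊆ M }, where R(S) = Σ_{i∈S} R_i. -/
lemma two_count_le {α : Type*} [DecidableEq α] (D : Multiset α) {X Y : α} (hne : X ≠ Y) :
    D.count X + D.count Y ≤ Multiset.card D := by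
  have h1 : D.count X = (D.filter (fun a => ¬ a = Y)).count X := by
    rw [Multiset.count_filter, if_pos hne]
  have h2 : (D.filter (fun a => ¬ a = Y)).count X ≤ Multiset.card (D.filter (fun a => ¬ a = Y)) :=
    Multiset.count_le_card _ _
  have h3 : Multiset.card (D.filter (fun a => a = Y)) + Multiset.card (D.filter (fun a => ¬ a = Y)) = Multiset.card D := by
    rw [← Multiset.card_add, Multiset.filter_add_not]
  have h5 : Multiset.card (D.filter (fun a => a = Y)) = D.count Y := by
    rw [Multiset.filter_eq', Multiset.card_replicate]
  omega

lemma three_count_le {α : Type*} [DecidableEq α] (D : Multiset α) {X Y Z : α}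
    (hxy : X ≠ Y) (hxz : X ≠ Z) (hyz : Y ≠ Z) :
    D.count X + D.count Y + D.count Z ≤ Multiset.card D := by
  have h1 : D.count X = (D.filter (fun a => ¬ a = Z)).count X := by
    rw [Multiset.count_filter, if_pos hxz]
  have h1' : D.count Y = (D.filter (fun a => ¬ a = Z)).count Y := by
    rw [Multiset.count_filter, if_pos hyz]
  have h2 := two_count_le (D.filter (fun a => ¬ a = Z)) hxy
  have h3 : Multiset.card (D.filter (fun a => a = Z)) + Multiset.card (D.filter (fun a => ¬ a = Z)) = Multiset.card D := by
    rw [← Multiset.card_add, Multiset.filter_add_not]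
  have h5 : Multiset.card (D.filter (fun a => a = Z)) = D.count Z := by
    rw [Multiset.filter_eq', Multiset.card_replicate]
  omega

section cover
variable {m : ℕ}

/-- number of members of `C` (with multiplicity) containing `x` -/
def mcover (C : Multiset (Finset (Fin m))) (x : Fin m) : ℕ :=
  Multiset.card (C.filter (fun X => x ∈ X))

lemma count_le_mcover (C : Multiset (Finset (Fin m))) {X : Finset (Fin m)} {x : Fin m}
    (hx : x ∈ X) : C.count X ≤ mcover C x := by
  have : C.count X = (C.filter (fun V => x ∈ V)).count X := by
    rw [Multiset.count_filter, if_pos hx]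
  rw [mcover, this]; exact Multiset.count_le_card _ _

lemma two_count_le_mcover (C : Multiset (Finset (Fin m))) {X Y : Finset (Fin m)} {x : Fin m}
    (hne : X ≠ Y) (hx : x ∈ X) (hy : x ∈ Y) :
    C.count X + C.count Y ≤ mcover C x := by
  have h1 : C.count X = (C.filter (fun V => x ∈ V)).count X := by
    rw [Multiset.count_filter, if_pos hx]
  have h2 : C.count Y = (C.filter (fun V => x ∈ V)).count Y := by
    rw [Multiset.count_filter, if_pos hy]
  rw [mcover, h1, h2]; exact two_count_le _ hne

lemma three_count_le_mcover (C : Multiset (Finset (Fin m))) {X Y Z : Finset (Fin m)} {x : Fin m}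
    (hxy : X ≠ Y) (hxz : X ≠ Z) (hyz : Y ≠ Z) (hx : x ∈ X) (hy : x ∈ Y) (hz : x ∈ Z) :
    C.count X + C.count Y + C.count Z ≤ mcover C x := by
  have h1 : C.count X = (C.filter (fun V => x ∈ V)).count X := by
    rw [Multiset.count_filter, if_pos hx]
  have h2 : C.count Y = (C.filter (fun V => x ∈ V)).count Y := by
    rw [Multiset.count_filter, if_pos hy]
  have h3 : C.count Z = (C.filter (fun V => x ∈ V)).count Z := by
    rw [Multiset.count_filter, if_pos hz]
  rw [mcover, h1, h2, h3]; exact three_count_le _ hxy hxz hyz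

lemma mcover_cons (X : Finset (Fin m)) (C : Multiset (Finset (Fin m))) (x : Fin m) :
    mcover (X ::ₘ C) x = (if x ∈ X then 1 else 0) + mcover C x := by
  rw [mcover, Multiset.filter_cons, mcover]
  split_ifs with h
  · simp [Nat.add_comm]
  · simp

lemma exists_mem_of_mcover_pos {C : Multiset (Finset (Fin m))} {x : Fin m}
    (h : 0 < mcover C x) : ∃ X ∈ C, x ∈ X := by
  rw [mcover, ← Multiset.countP_eq_card_filter] at h
  exact Multiset.countP_pos.mp h
end cover

section
variable {m : ℕ}

/-- potential function: large when sets are small -/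
def msr (C : Multiset (Finset (Fin m))) : ℕ :=
  (C.map (fun X => m * m - X.card * X.card)).sum

lemma msr_cons (X : Finset (Fin m)) (C : Multiset (Finset (Fin m))) :
    msr (X ::ₘ C) = (m * m - X.card * X.card) + msr C := by
  rw [msr, Multiset.map_cons, Multiset.sum_cons, msr]

lemma card_le_m (X : Finset (Fin m)) : X.card ≤ m := by
  simpa using Finset.card_le_univ X

lemma msr_uncross {X Y : Finset (Fin m)} (hne : (X ∩ Y).Nonempty)
    (hXY : ¬ X ⊆ Y) (hYX : ¬ Y ⊆ X) (D : Multiset (Finset (Fin m))) :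
    msr ((X ∪ Y) ::ₘ (X ∩ Y) ::ₘ D) < msr (X ::ₘ Y ::ₘ D) := by
  have h1 : (X ∪ Y).card + (X ∩ Y).card = X.card + Y.card :=
    Finset.card_union_add_card_inter X Y
  have h2 : X.card < (X ∪ Y).card := by
    apply Finset.card_lt_card
    refine ⟨Finset.subset_union_left, fun h => hYX ?_⟩
    exact fun a ha => h (Finset.mem_union_right X ha)
  have h3 : (X ∩ Y).card < X.card := by
    apply Finset.card_lt_card
    refine ⟨Finset.inter_subset_left, fun h => hXY ?_⟩
    exact fun a ha => Finset.mem_of_mem_inter_right (h ha)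
  have h4 : (X ∩ Y).card < Y.card := by
    apply Finset.card_lt_card
    refine ⟨Finset.inter_subset_right, fun h => hYX ?_⟩
    exact fun a ha => Finset.mem_of_mem_inter_left (h ha)
  have hu : (X ∪ Y).card ≤ m := card_le_m _
  have hx : X.card ≤ m := card_le_m _
  have hy : Y.card ≤ m := card_le_m _
  have hi : (X ∩ Y).card ≤ m := card_le_m _
  have hsq : X.card * X.card + Y.card * Y.card <
      (X ∪ Y).card * (X ∪ Y).card + (X ∩ Y).card * (X ∩ Y).card := by
    nlinarith
  simp only [msr_cons]
  have hum : (X ∪ Y).card * (X ∪ Y).card ≤ m * m := Nat.mul_le_mul hu hu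
  have hxm : X.card * X.card ≤ m * m := Nat.mul_le_mul hx hx
  have hym : Y.card * Y.card ≤ m * m := Nat.mul_le_mul hy hy
  have him : (X ∩ Y).card * (X ∩ Y).card ≤ m * m := Nat.mul_le_mul hi hi
  omega
end


/-- `P` is a partition of the finite set `S`: its members are nonempty,
pairwise disjoint, and their union is `S`. -/
def IsFinpartitionOf {α : Type*} [DecidableEq α]
    (P : Finset (Finset α)) (S : Finset α) : Prop :=
  (∀ V ∈ P, V ≠ ∅) ∧
  (∀ V ∈ P, ∀ W ∈ P, V ≠ W → Disjoint V W) ∧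
  P.sup id = S



section
variable {m : ℕ}
lemma mcover_add (s t : Multiset (Finset (Fin m))) (x : Fin m) :
    mcover (s + t) x = mcover s x + mcover t x := by
  rw [mcover, Multiset.filter_add, Multiset.card_add, mcover, mcover]

lemma part_mcover {P : Finset (Finset (Fin m))} {S : Finset (Fin m)}
    (h : IsFinpartitionOf P S) (x : Fin m) :
    mcover P.val x = if x ∈ S then 1 else 0 := by
  obtain ⟨hne, hdisj, hsup⟩ := h
  have hmc : mcover P.val x = (P.filter (fun V => x ∈ V)).card := rfl
  rw [hmc]
  split_ifs with hx
  · rw [← hsup, Finset.mem_sup] at hx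
    obtain ⟨V, hV, hxV⟩ := hx
    rw [show P.filter (fun V => x ∈ V) = {V} from ?_, Finset.card_singleton]
    apply Finset.eq_singleton_iff_unique_mem.mpr
    refine ⟨Finset.mem_filter.mpr ⟨hV, hxV⟩, fun W hW => ?_⟩
    obtain ⟨hWP, hxW⟩ := Finset.mem_filter.mp hW
    by_contra hWV
    exact (Finset.disjoint_left.mp (hdisj W hWP V hV hWV)) hxW hxV
  · rw [Finset.card_eq_zero]
    apply Finset.filter_eq_empty_iff.mpr
    intro V hV hxV
    exact hx (hsup ▸ (Finset.mem_sup.mpr ⟨V, hV, hxV⟩))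

-- sum over a partition
lemma part_sum {P : Finset (Finset (Fin m))} {S : Finset (Fin m)}
    (h : IsFinpartitionOf P S) (R : Fin m → ℤ) :
    ∑ i ∈ S, R i = ∑ V ∈ P, ∑ i ∈ V, R i := by
  obtain ⟨hne, hdisj, hsup⟩ := h
  rw [← hsup, Finset.sup_eq_biUnion]
  apply Finset.sum_biUnion
  intro V hV W hW hVW
  exact hdisj V hV W hW hVW
end

lemma dilworth_key {m : ℕ} (f : Finset (Fin m) → ℤ)
    (hf : ∀ S T : Finset (Fin m), (S ∩ T).Nonempty →
      f (S ∪ T) + f (S ∩ T) ≤ f S + f T)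
    (g : Finset (Fin m) → ℤ)
    (hg_le : ∀ (S : Finset (Fin m)) (P : Finset (Finset (Fin m))),
      IsFinpartitionOf P S → g S ≤ ∑ V ∈ P, f V) :
    ∀ (n : ℕ) (C : Multiset (Finset (Fin m))), msr C ≤ n →
      (∀ X ∈ C, X ≠ ∅) → (∀ x, mcover C x ≤ 2) →
      g (Finset.univ.filter fun x => 1 ≤ mcover C x) +
        g (Finset.univ.filter fun x => 2 ≤ mcover C x) ≤ (C.map f).sum := by
  intro n
  induction n using Nat.strong_induction_on with
  | _ n IH =>
  intro C hmsr hne hcov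
  by_cases hcross : ∃ X ∈ C, ∃ Y ∈ C.erase X, (X ∩ Y).Nonempty ∧ ¬ X ⊆ Y ∧ ¬ Y ⊆ X
  · -- uncrossing step
    obtain ⟨X, hX, Y, hY, hXYne, hXY, hYX⟩ := hcross
    obtain ⟨D, hD⟩ := Multiset.exists_cons_of_mem hY
    have hC : C = X ::ₘ Y ::ₘ D := by rw [← Multiset.cons_erase hX, hD]
    set C2 := (X ∪ Y) ::ₘ (X ∩ Y) ::ₘ D with hC2
    have hcov2 : ∀ x, mcover C2 x = mcover C x := by
      intro x
      rw [hC, hC2]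
      simp only [mcover_cons, Finset.mem_union, Finset.mem_inter]
      by_cases hx : x ∈ X <;> by_cases hy : x ∈ Y <;> simp [hx, hy]
    have hmsr2 : msr C2 < n := by
      rw [hC] at hmsr
      exact lt_of_lt_of_le (msr_uncross hXYne hXY hYX D) hmsr
    have hne2 : ∀ Z ∈ C2, Z ≠ ∅ := by
      intro Z hZ
      rw [hC2, Multiset.mem_cons, Multiset.mem_cons] at hZ
      rcases hZ with rfl | rfl | hZ
      · have := hne X (hC ▸ Multiset.mem_cons_self _ _)
        intro h
        exact this (Finset.subset_empty.mp (h ▸ Finset.subset_union_left))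
      · exact Finset.nonempty_iff_ne_empty.mp hXYne
      · exact hne Z (hC ▸ Multiset.mem_cons_of_mem (Multiset.mem_cons_of_mem hZ))
    have hcov2' : ∀ x, mcover C2 x ≤ 2 := fun x => (hcov2 x) ▸ hcov x
    have main := IH (msr C2) hmsr2 C2 le_rfl hne2 hcov2'
    have hA : (Finset.univ.filter fun x => 1 ≤ mcover C x) =
        (Finset.univ.filter fun x => 1 ≤ mcover C2 x) := by
      apply Finset.filter_congr; intro x _; rw [hcov2 x]
    have hB : (Finset.univ.filter fun x => 2 ≤ mcover C x) =
        (Finset.univ.filter fun x => 2 ≤ mcover C2 x) := by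
      apply Finset.filter_congr; intro x _; rw [hcov2 x]
    rw [hA, hB]
    refine le_trans main ?_
    rw [hC, hC2]
    simp only [Multiset.map_cons, Multiset.sum_cons]
    have := hf X Y hXYne
    linarith
  · -- laminar case
    push_neg at hcross
    have hlam : ∀ X ∈ C, ∀ Y ∈ C, X ≠ Y → ∀ x, x ∈ X → x ∈ Y → X ⊆ Y ∨ Y ⊆ X := by
      intro X hX Y hY hne' x hx hy
      have hY' : Y ∈ C.erase X := (Multiset.mem_erase_of_ne (Ne.symm hne')).mpr hY
      by_cases h : X ⊆ Y
      · exact Or.inl h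
      · exact Or.inr (hcross X hX Y hY' ⟨x, Finset.mem_inter.mpr ⟨hx, hy⟩⟩ h)
    set MaxS := C.toFinset.filter (fun X => ∀ Y ∈ C.toFinset, ¬ X ⊂ Y) with hMaxS
    set IS := C.toFinset.filter
      (fun X => (¬ ∀ Y ∈ C.toFinset, ¬ X ⊂ Y) ∨ 2 ≤ C.count X) with hIS
    -- every member has a maximal superset among members
    have hexmax : ∀ X ∈ C.toFinset, ∃ Z, X ⊆ Z ∧ Z ∈ C.toFinset ∧
        ∀ Y ∈ C.toFinset, ¬ Z ⊂ Y := by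
      intro X hX
      obtain ⟨Z, hXZ, hZmax⟩ := Finite.exists_le_maximal (p := (· ∈ C.toFinset)) hX
      refine ⟨Z, hXZ, hZmax.prop, fun Y hY hZY => ?_⟩
      have hYZ : Y ≤ Z := hZmax.2 hY hZY.subset
      exact (Finset.ssubset_iff_subset_ne.mp hZY).2 (le_antisymm hZY.subset hYZ)
    -- a member strictly contained in a member of IS gives a contradiction
    have hnest_false : ∀ V ∈ C, ∀ W ∈ IS, V ⊂ W → False := by
      intro V hV W hW hVW
      obtain ⟨x, hxV⟩ := Finset.nonempty_iff_ne_empty.mpr (hne V hV)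
      have hxW : x ∈ W := hVW.subset hxV
      have hWC : W ∈ C := Multiset.mem_toFinset.mp (Finset.mem_filter.mp hW).1
      have hcV : 1 ≤ C.count V := Multiset.count_pos.mpr hV
      have hcW : 1 ≤ C.count W := Multiset.count_pos.mpr hWC
      rcases (Finset.mem_filter.mp hW).2 with hnm | h2
      · push_neg at hnm
        obtain ⟨Z, hZ, hWZ⟩ := hnm
        have hZC : Z ∈ C := Multiset.mem_toFinset.mp hZ
        have hcZ : 1 ≤ C.count Z := Multiset.count_pos.mpr hZC
        have hxZ : x ∈ Z := hWZ.subset hxW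
        have := three_count_le_mcover C (x := x)
          (Finset.ssubset_iff_subset_ne.mp hVW).2
          (Finset.ssubset_iff_subset_ne.mp (hVW.trans hWZ)).2
          (Finset.ssubset_iff_subset_ne.mp hWZ).2 hxV hxW hxZ
        have := hcov x
        omega
      · have := two_count_le_mcover C (Finset.ssubset_iff_subset_ne.mp hVW).2 hxV hxW
        have := hcov x
        omega
    -- MaxS is a partition of the once-covered set
    have hMaxpart : IsFinpartitionOf MaxS (Finset.univ.filter fun x => 1 ≤ mcover C x) := by
      refine ⟨?_, ?_, ?_⟩
      · intro V hV
        exact hne V (Multiset.mem_toFinset.mp (Finset.mem_filter.mp hV).1)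
      · intro V hV W hW hVW
        rw [Finset.disjoint_left]
        intro x hxV hxW
        have hVC : V ∈ C := Multiset.mem_toFinset.mp (Finset.mem_filter.mp hV).1
        have hWC : W ∈ C := Multiset.mem_toFinset.mp (Finset.mem_filter.mp hW).1
        rcases hlam V hVC W hWC hVW x hxV hxW with h | h
        · exact (Finset.mem_filter.mp hV).2 W (Finset.mem_filter.mp hW).1
            (Finset.ssubset_iff_subset_ne.mpr ⟨h, hVW⟩)
        · exact (Finset.mem_filter.mp hW).2 V (Finset.mem_filter.mp hV).1
            (Finset.ssubset_iff_subset_ne.mpr ⟨h, hVW.symm⟩)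
      · ext x
        rw [Finset.mem_sup]
        simp only [Finset.mem_filter, Finset.mem_univ, true_and, id]
        constructor
        · rintro ⟨V, hV, hxV⟩
          have hVC : V ∈ C := Multiset.mem_toFinset.mp (Finset.mem_filter.mp hV).1
          have := count_le_mcover C hxV
          have := Multiset.count_pos.mpr hVC
          omega
        · intro hx
          obtain ⟨X, hX, hxX⟩ := exists_mem_of_mcover_pos (C := C) (x := x) (by omega)
          obtain ⟨Z, hXZ, hZF, hZmax⟩ := hexmax X (Multiset.mem_toFinset.mpr hX)
          exact ⟨Z, Finset.mem_filter.mpr ⟨hZF, hZmax⟩, hXZ hxX⟩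
    -- IS is a partition of the twice-covered set
    have hISpart : IsFinpartitionOf IS (Finset.univ.filter fun x => 2 ≤ mcover C x) := by
      refine ⟨?_, ?_, ?_⟩
      · intro V hV
        exact hne V (Multiset.mem_toFinset.mp (Finset.mem_filter.mp hV).1)
      · intro V hV W hW hVW
        rw [Finset.disjoint_left]
        intro x hxV hxW
        have hVC : V ∈ C := Multiset.mem_toFinset.mp (Finset.mem_filter.mp hV).1
        have hWC : W ∈ C := Multiset.mem_toFinset.mp (Finset.mem_filter.mp hW).1
        rcases hlam V hVC W hWC hVW x hxV hxW with h | h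
        · exact hnest_false V hVC W hW (Finset.ssubset_iff_subset_ne.mpr ⟨h, hVW⟩)
        · exact hnest_false W hWC V hV (Finset.ssubset_iff_subset_ne.mpr ⟨h, hVW.symm⟩)
      · ext x
        rw [Finset.mem_sup]
        simp only [Finset.mem_filter, Finset.mem_univ, true_and, id]
        constructor
        · rintro ⟨V, hV, hxV⟩
          have hVC : V ∈ C := Multiset.mem_toFinset.mp (Finset.mem_filter.mp hV).1
          rcases (Finset.mem_filter.mp hV).2 with hnm | h2
          · push_neg at hnm
            obtain ⟨Z, hZ, hVZ⟩ := hnm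
            have hZC : Z ∈ C := Multiset.mem_toFinset.mp hZ
            have := two_count_le_mcover C (Finset.ssubset_iff_subset_ne.mp hVZ).2
              hxV (hVZ.subset hxV)
            have := Multiset.count_pos.mpr hVC
            have := Multiset.count_pos.mpr hZC
            omega
          · have := count_le_mcover C hxV
            omega
        · intro hx
          obtain ⟨X, hX, hxX⟩ := exists_mem_of_mcover_pos (show 0 < mcover C x by omega)
          by_cases h2 : 2 ≤ C.count X
          · exact ⟨X, Finset.mem_filter.mpr ⟨Multiset.mem_toFinset.mpr hX, Or.inr h2⟩, hxX⟩
          · -- count X = 1, find another member containing x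
            have hone : C.count X = 1 := by
              have := Multiset.count_pos.mpr hX; omega
            have hexy : ∃ Y ∈ C, x ∈ Y ∧ Y ≠ X := by
              by_contra hcon
              push_neg at hcon
              have hall : ∀ V ∈ C.filter (fun V => x ∈ V), V = X := by
                intro V hV
                have hV' := Multiset.mem_filter.mp hV
                exact hcon V hV'.1 hV'.2
              have hrep := Multiset.eq_replicate_card.mpr hall
              have hle : (C.filter (fun V => x ∈ V)).count X ≤ C.count X :=
                Multiset.count_le_of_le X (Multiset.filter_le _ C)
              rw [hrep, Multiset.count_replicate_self] at hle
              rw [mcover] at hx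
              omega
            obtain ⟨Y, hY, hxY, hYX⟩ := hexy
            rcases hlam Y hY X hX hYX x hxY hxX with h | h
            · -- Y ⊊ X
              refine ⟨Y, Finset.mem_filter.mpr ⟨Multiset.mem_toFinset.mpr hY, Or.inl ?_⟩, hxY⟩
              push_neg
              exact ⟨X, Multiset.mem_toFinset.mpr hX,
                Finset.ssubset_iff_subset_ne.mpr ⟨h, hYX⟩⟩
            · -- X ⊊ Y
              refine ⟨X, Finset.mem_filter.mpr ⟨Multiset.mem_toFinset.mpr hX, Or.inl ?_⟩, hxX⟩
              push_neg
              exact ⟨Y, Multiset.mem_toFinset.mpr hY,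
                Finset.ssubset_iff_subset_ne.mpr ⟨h, hYX.symm⟩⟩
    -- decomposition of C
    have hdecomp : C = MaxS.val + IS.val := by
      refine Multiset.ext.mpr fun Z => ?_
      rw [Multiset.count_add]
      rw [Multiset.count_eq_of_nodup MaxS.nodup, Multiset.count_eq_of_nodup IS.nodup]
      by_cases hZC : Z ∈ C
      · have hZF : Z ∈ C.toFinset := Multiset.mem_toFinset.mpr hZC
        obtain ⟨x, hxZ⟩ := Finset.nonempty_iff_ne_empty.mpr (hne Z hZC)
        have hc2 : C.count Z ≤ 2 := le_trans (count_le_mcover C hxZ) (hcov x)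
        have hc1 : 1 ≤ C.count Z := Multiset.count_pos.mpr hZC
        by_cases hmax : ∀ Y ∈ C.toFinset, ¬ Z ⊂ Y
        · have hZM : Z ∈ MaxS.val := by
            rw [Finset.mem_val, hMaxS, Finset.mem_filter]; exact ⟨hZF, hmax⟩
          by_cases h2 : 2 ≤ C.count Z
          · have hZI : Z ∈ IS.val := by
              rw [Finset.mem_val, hIS, Finset.mem_filter]; exact ⟨hZF, Or.inr h2⟩
            rw [if_pos hZM, if_pos hZI]; omega
          · have hZI : Z ∉ IS.val := by
              rw [Finset.mem_val, hIS, Finset.mem_filter]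
              rintro ⟨-, hnm | h2'⟩
              · exact hnm hmax
              · exact h2 h2'
            rw [if_pos hZM, if_neg hZI]; omega
        · have h2' : ¬ 2 ≤ C.count Z := by
            intro h2
            push_neg at hmax
            obtain ⟨Y, hY, hZY⟩ := hmax
            have hYC : Y ∈ C := Multiset.mem_toFinset.mp hY
            have := two_count_le_mcover C (Finset.ssubset_iff_subset_ne.mp hZY).2
              hxZ (hZY.subset hxZ)
            have := Multiset.count_pos.mpr hYC
            have := hcov x
            omega
          have hZM : Z ∉ MaxS.val := by
            rw [Finset.mem_val, hMaxS, Finset.mem_filter]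
            rintro ⟨-, hm⟩
            exact hmax hm
          have hZI : Z ∈ IS.val := by
            rw [Finset.mem_val, hIS, Finset.mem_filter]; exact ⟨hZF, Or.inl hmax⟩
          rw [if_neg hZM, if_pos hZI]; omega
      · have hZF : Z ∉ C.toFinset := fun h => hZC (Multiset.mem_toFinset.mp h)
        have hZM : Z ∉ MaxS.val := by
          rw [Finset.mem_val, hMaxS, Finset.mem_filter]
          rintro ⟨h, -⟩; exact hZF h
        have hZI : Z ∉ IS.val := by
          rw [Finset.mem_val, hIS, Finset.mem_filter]
          rintro ⟨h, -⟩; exact hZF h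
        rw [if_neg hZM, if_neg hZI, Multiset.count_eq_zero_of_notMem hZC]
      -- done
    have hsum : (C.map f).sum = (∑ V ∈ MaxS, f V) + (∑ V ∈ IS, f V) := by
      rw [hdecomp, Multiset.map_add, Multiset.sum_add]
      rfl
    rw [hsum]
    have h1 := hg_le _ MaxS hMaxpart
    have h2 := hg_le _ IS hISpart
    linarith

/-- Dilworth truncation: the partition-minimum `g` of an
intersecting submodular `f` is fully submodular and has the same polyhedron. -/
theorem stmt_4 {m : ℕ} (f : Finset (Fin m) → ℤ)
    (hf0 : f ∅ = 0)
    (hf : ∀ S T : Finset (Fin m), (S ∩ T).Nonempty →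
      f (S ∪ T) + f (S ∩ T) ≤ f S + f T)
    (g : Finset (Fin m) → ℤ)
    (hg_le : ∀ (S : Finset (Fin m)) (P : Finset (Finset (Fin m))),
      IsFinpartitionOf P S → g S ≤ ∑ V ∈ P, f V)
    (hg_ex : ∀ S : Finset (Fin m), ∃ P : Finset (Finset (Fin m)),
      IsFinpartitionOf P S ∧ g S = ∑ V ∈ P, f V) :
    (∀ S T : Finset (Fin m), g (S ∪ T) + g (S ∩ T) ≤ g S + g T) ∧
    {R : Fin m → ℤ | ∀ S : Finset (Fin m), ∑ i ∈ S, R i ≤ f S}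
      = {R : Fin m → ℤ | ∀ S : Finset (Fin m), ∑ i ∈ S, R i ≤ g S} := by
  constructor
  · -- submodularity
    intro S T
    obtain ⟨P, hP, hPe⟩ := hg_ex S
    obtain ⟨Q, hQ, hQe⟩ := hg_ex T
    set C : Multiset (Finset (Fin m)) := P.val + Q.val with hCdef
    have hcovC : ∀ x, mcover C x =
        (if x ∈ S then 1 else 0) + (if x ∈ T then 1 else 0) := by
      intro x
      rw [hCdef, mcover_add, part_mcover hP x, part_mcover hQ x]
    have hneC : ∀ X ∈ C, X ≠ ∅ := by
      intro X hX
      rw [hCdef, Multiset.mem_add] at hX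
      rcases hX with hX | hX
      · exact hP.1 X (Finset.mem_val.mp hX)
      · exact hQ.1 X (Finset.mem_val.mp hX)
    have hcov2 : ∀ x, mcover C x ≤ 2 := by
      intro x; rw [hcovC x]; split_ifs <;> omega
    have hkey := dilworth_key f hf g hg_le (msr C) C le_rfl hneC hcov2
    have hA : (Finset.univ.filter fun x => 1 ≤ mcover C x) = S ∪ T := by
      ext x
      simp only [Finset.mem_filter, Finset.mem_univ, true_and, hcovC x,
        Finset.mem_union]
      by_cases hS : x ∈ S <;> by_cases hT : x ∈ T <;> simp [hS, hT]
    have hB : (Finset.univ.filter fun x => 2 ≤ mcover C x) = S ∩ T := by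
      ext x
      simp only [Finset.mem_filter, Finset.mem_univ, true_and, hcovC x,
        Finset.mem_inter]
      by_cases hS : x ∈ S <;> by_cases hT : x ∈ T <;> simp [hS, hT]
    rw [hA, hB] at hkey
    have hsum : (C.map f).sum = (∑ V ∈ P, f V) + (∑ V ∈ Q, f V) := by
      rw [hCdef, Multiset.map_add, Multiset.sum_add]; rfl
    rw [hsum, ← hPe, ← hQe] at hkey
    exact hkey
  · -- polyhedra coincide
    ext R
    simp only [Set.mem_setOf_eq]
    constructor
    · intro hR S
      obtain ⟨P, hP, hPe⟩ := hg_ex S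
      rw [hPe, part_sum hP R]
      exact Finset.sum_le_sum fun V _ => hR V
    · intro hR S
      rcases eq_or_ne S ∅ with rfl | hS
      · simp [hf0]
      · have hpart : IsFinpartitionOf {S} S := by
          refine ⟨?_, ?_, ?_⟩
          · intro V hV; rw [Finset.mem_singleton] at hV; subst hV; exact hS
          · intro V hV W hW hVW
            rw [Finset.mem_singleton] at hV hW
            exact absurd (hV.trans hW.symm) hVW
          · simp
        have h1 := hg_le S {S} hpart
        rw [Finset.sum_singleton] at h1
        exact le_trans (hR S) h1
end

section
/- Let g: 2^M → ℤ be fully submodular with g(∅)=0 and let the greedy vector for the identity ordering be R*_i = g({1,...,i}) − g({1,...,i−1}). Then for each i, R*_i = min { g(S ∪ {i}) − R*(S) : S ⊆ {1,...,i−1} }, where R*(S) = Σ_{k∈S} R*_k. -/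
/-- Greedy vector lies in the submodular polyhedron. -/
lemma greedy_in_poly {m : ℕ} (g : Finset (Fin m) → ℤ)
    (hg0 : g ∅ = 0)
    (hg : ∀ S T : Finset (Fin m), g (S ∪ T) + g (S ∩ T) ≤ g S + g T)
    (Rstar : Fin m → ℤ)
    (hRstar : ∀ i : Fin m,
      Rstar i = g (Finset.univ.filter (· ≤ i)) - g (Finset.univ.filter (· < i))) :
    ∀ S : Finset (Fin m), ∑ k ∈ S, Rstar k ≤ g S := by
  intro S
  induction S using Finset.strongInductionOn with
  | _ S ih =>
    rcases S.eq_empty_or_nonempty with rfl | hS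
    · simp [hg0]
    · set j := S.max' hS with hj
      have hjS : j ∈ S := S.max'_mem hS
      have hunion : S ∪ Finset.univ.filter (· < j) = Finset.univ.filter (· ≤ j) := by
        ext k
        simp only [Finset.mem_union, Finset.mem_filter, Finset.mem_univ, true_and]
        constructor
        · rintro (h | h)
          · exact S.le_max' k h
          · exact le_of_lt h
        · intro h
          rcases eq_or_lt_of_le h with rfl | h
          · exact Or.inl hjS
          · exact Or.inr h
      have hinter : S ∩ Finset.univ.filter (· < j) = S.erase j := by
        ext k
        simp only [Finset.mem_inter, Finset.mem_filter, Finset.mem_univ, true_and,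
          Finset.mem_erase]
        constructor
        · rintro ⟨h1, h2⟩
          exact ⟨ne_of_lt h2, h1⟩
        · rintro ⟨h1, h2⟩
          exact ⟨h2, lt_of_le_of_ne (S.le_max' k h2) h1⟩
      have key := hg S (Finset.univ.filter (· < j))
      rw [hunion, hinter] at key
      have hsum : ∑ k ∈ S, Rstar k = Rstar j + ∑ k ∈ S.erase j, Rstar k :=
        (Finset.add_sum_erase S Rstar hjS).symm
      have ihe := ih (S.erase j) (Finset.erase_ssubset hjS)
      have hRj := hRstar j
      rw [hsum, hRj]
      linarith

/-- each greedy increment of Edmonds' algorithm equals the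
minimal value of `g (S ∪ {i}) - R*(S)` over subsets `S` of the previously
processed elements. -/
theorem stmt_6 {m : ℕ} (g : Finset (Fin m) → ℤ)
    (hg0 : g ∅ = 0)
    (hg : ∀ S T : Finset (Fin m), g (S ∪ T) + g (S ∩ T) ≤ g S + g T)
    (Rstar : Fin m → ℤ)
    (hRstar : ∀ i : Fin m,
      Rstar i = g (Finset.univ.filter (· ≤ i)) - g (Finset.univ.filter (· < i))) :
    ∀ i : Fin m,
      (∀ S : Finset (Fin m), S ⊆ Finset.univ.filter (· < i) →
        Rstar i ≤ g (insert i S) - ∑ k ∈ S, Rstar k) ∧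
      (∃ S : Finset (Fin m), S ⊆ Finset.univ.filter (· < i) ∧
        Rstar i = g (insert i S) - ∑ k ∈ S, Rstar k) := by
  have poly := greedy_in_poly g hg0 hg Rstar hRstar
  -- telescoping sum
  have tel : ∀ n : ℕ, ∑ k ∈ Finset.univ.filter (fun k : Fin m => (k : ℕ) < n), Rstar k
      = g (Finset.univ.filter (fun k : Fin m => (k : ℕ) < n)) := by
    intro n
    induction n with
    | zero => simp [hg0]
    | succ n ihn =>
      by_cases hn : n < m
      · have hins : Finset.univ.filter (fun k : Fin m => (k : ℕ) < n + 1)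
            = insert ⟨n, hn⟩ (Finset.univ.filter (fun k : Fin m => (k : ℕ) < n)) := by
          ext k
          simp only [Finset.mem_filter, Finset.mem_univ, true_and, Finset.mem_insert]
          constructor
          · intro h
            rcases Nat.lt_succ_iff_lt_or_eq.mp h with h | h
            · exact Or.inr h
            · exact Or.inl (Fin.ext h)
          · rintro (rfl | h)
            · exact Nat.lt_succ_self n
            · exact Nat.lt_succ_of_lt h
        have hnot : (⟨n, hn⟩ : Fin m) ∉ Finset.univ.filter (fun k : Fin m => (k : ℕ) < n) := by
          simp
        have hle : Finset.univ.filter (· ≤ (⟨n, hn⟩ : Fin m))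
            = Finset.univ.filter (fun k : Fin m => (k : ℕ) < n + 1) := by
          ext k
          simp [Fin.le_def, Nat.lt_succ_iff]
        have hlt : Finset.univ.filter (· < (⟨n, hn⟩ : Fin m))
            = Finset.univ.filter (fun k : Fin m => (k : ℕ) < n) := by
          ext k
          simp [Fin.lt_def]
        rw [hins, Finset.sum_insert hnot, ihn, hRstar ⟨n, hn⟩, hle, hlt, ← hins]
        ring
      · have heq : Finset.univ.filter (fun k : Fin m => (k : ℕ) < n + 1)
            = Finset.univ.filter (fun k : Fin m => (k : ℕ) < n) := by
          ext k
          have hk := k.isLt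
          simp only [Finset.mem_filter, Finset.mem_univ, true_and]
          omega
        rw [heq, ihn]
  intro i
  have hfilt : Finset.univ.filter (· < i) = Finset.univ.filter (fun k : Fin m => (k : ℕ) < i) := by
    ext k; simp only [Finset.mem_filter, Finset.mem_univ, true_and, Fin.lt_def]
  constructor
  · intro S hS
    have h1 : ∑ k ∈ insert i S, Rstar k ≤ g (insert i S) := poly _
    have hiS : i ∉ S := by
      intro h
      have := hS h
      rw [Finset.mem_filter] at this
      exact lt_irrefl i this.2
    rw [Finset.sum_insert hiS] at h1
    linarith
  · refine ⟨Finset.univ.filter (· < i), Finset.Subset.refl _, ?_⟩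
    have hins : insert i (Finset.univ.filter (· < i)) = Finset.univ.filter (· ≤ i) := by
      ext k
      simp only [Finset.mem_insert, Finset.mem_filter, Finset.mem_univ, true_and]
      constructor
      · rintro (rfl | h)
        · exact le_refl _
        · exact le_of_lt h
      · intro h
        rcases eq_or_lt_of_le h with rfl | h
        · exact Or.inl rfl
        · exact Or.inr h
    rw [hins, hfilt, tel i, ← hfilt, hRstar i]
end

section
/- Let g: 2^M → ℤ be fully submodular with g(∅)=0, c ∈ ℤ^m, and suppose there exists R in the base polyhedron B(g) with R_i ≤ c_i for all i. Then the base polyhedron of the restriction g^c(S) = min{ g(V) + c(S∖V) : V ⊆ S } satisfies B(g^c) = { R ∈ ℤ^m : R ∈ B(g), R_i ≤ c_i ∀i }. In particular g^c(M) = g(M). -/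
/-- with a feasible capacity vector, the base polyhedron of the
restriction `g^c` is exactly the capacity-constrained base polyhedron of `g`,
and `g^c(M) = g(M)`. -/
theorem stmt_13 {m : ℕ} (g : Finset (Fin m) → ℤ)
    (hg0 : g ∅ = 0)
    (hg : ∀ S T : Finset (Fin m), g (S ∪ T) + g (S ∩ T) ≤ g S + g T)
    (c : Fin m → ℤ)
    (gc : Finset (Fin m) → ℤ)
    (hgc_le : ∀ S V : Finset (Fin m), V ⊆ S →
      gc S ≤ g V + ∑ i ∈ S \ V, c i)
    (hgc_ex : ∀ S : Finset (Fin m), ∃ V : Finset (Fin m), V ⊆ S ∧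
      gc S = g V + ∑ i ∈ S \ V, c i)
    -- feasibility: some point of the base polyhedron of g satisfies the capacities
    (hfeas : ∃ R : Fin m → ℤ,
      (∀ S : Finset (Fin m), ∑ i ∈ S, R i ≤ g S) ∧
      (∑ i, R i = g Finset.univ) ∧ (∀ i, R i ≤ c i)) :
    ({R : Fin m → ℤ | (∀ S : Finset (Fin m), ∑ i ∈ S, R i ≤ gc S) ∧
        ∑ i, R i = gc Finset.univ}
      = {R : Fin m → ℤ | (∀ S : Finset (Fin m), ∑ i ∈ S, R i ≤ g S) ∧
        (∑ i, R i = g Finset.univ) ∧ (∀ i, R i ≤ c i)}) ∧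
    gc Finset.univ = g Finset.univ := by
  obtain ⟨R0, hR0le, hR0sum, hR0c⟩ := hfeas
  -- key: for any R in B(g) with R ≤ c, ∑_S R ≤ gc S
  have key : ∀ (R : Fin m → ℤ), (∀ S : Finset (Fin m), ∑ i ∈ S, R i ≤ g S) →
      (∀ i, R i ≤ c i) → ∀ S : Finset (Fin m), ∑ i ∈ S, R i ≤ gc S := by
    intro R hle hc S
    obtain ⟨V, hVS, hV⟩ := hgc_ex S
    rw [hV, ← Finset.sum_sdiff hVS]
    have h1 : ∑ i ∈ S \ V, R i ≤ ∑ i ∈ S \ V, c i :=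
      Finset.sum_le_sum fun i _ => hc i
    have h2 := hle V
    linarith
  have hgcM : gc Finset.univ = g Finset.univ := by
    have h1 : gc Finset.univ ≤ g Finset.univ := by
      have := hgc_le Finset.univ Finset.univ (le_refl _)
      simpa [hg0] using this
    have h2 : g Finset.univ ≤ gc Finset.univ := by
      have := key R0 hR0le hR0c Finset.univ
      rw [hR0sum] at this
      exact this
    omega
  refine ⟨?_, hgcM⟩
  ext R
  simp only [Set.mem_setOf_eq]
  constructor
  · rintro ⟨h1, h2⟩
    have hle : ∀ S : Finset (Fin m), ∑ i ∈ S, R i ≤ g S := by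
      intro S
      have := hgc_le S S (le_refl _)
      simp only [Finset.sdiff_self, Finset.sum_empty, add_zero] at this
      exact le_trans (h1 S) this
    refine ⟨hle, by rw [h2, hgcM], ?_⟩
    intro i
    have := h1 {i}
    have h3 := hgc_le {i} ∅ (Finset.empty_subset _)
    simp [hg0] at h3
    simp only [Finset.sum_singleton] at this
    linarith
  · rintro ⟨h1, h2, h3⟩
    exact ⟨key R h1 h3, by rw [h2, hgcM]⟩
end

section
/- Chain-telescoping achievability: let rank: 2^M → ℤ be a submodular rank function of vector sets with N = rank(M), and fix user 1. For any permutation j(2),...,j(m) of M∖{1}, define R_{j(t)} = rank({1,j(2),...,j(t)}) − rank({1,j(2),...,j(t−1)}) for t = 2,...,m (and R_1 arbitrary). Then for each t = 2,...,m, Σ_{s=t}^{m} R_{j(s)} = N − rank({1,j(2),...,j(t−1)}), and consequently the vector R satisfies Σ_{i∈S} R_i ≥ N − rank(M∖S) for every S ⊆ M with 1 ∉ S. -/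
/-!
The span rank `S ↦ dim span ⋃_{i ∈ S} A i` is submodular by Grassmann's formula, hence has
diminishing returns: adding an element to a larger set gains at most as much as adding it to a
smaller one. Along the chain `P_k = {σ 0, …, σ (k-1)}`, the rates `R (σ t)` are the marginal gains
of `σ t` over `P_t`, so tail sums telescope. For a cut `S`, walk instead along the chain
`(univ \ S) ∪ P_k`, which telescopes from `rank (univ \ S)` to `N`: it only grows at the steps
with `σ t ∈ S`, and there by at most `R (σ t)`, since `P_t ⊆ (univ \ S) ∪ P_t`.
-/

open Finset Module Submodule

def IsSubmodular {β G : Type*} [Lattice β] [Add G] [LE G] (f : β → G) : Prop :=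
  ∀ X Y, f (X ⊔ Y) + f (X ⊓ Y) ≤ f X + f Y

theorem isSubmodular_finrank_span_biUnion {F V ι : Type*} [Field F] [AddCommGroup V]
    [Module F V] [DecidableEq ι] (A : ι → Finset V) :
    IsSubmodular fun S : Finset ι =>
      (finrank F (span F (⋃ i ∈ (S : Set ι), (A i : Set V))) : ℤ) := by
  classical
  intro X Y
  dsimp only
  rw [← coe_biUnion, ← coe_biUnion, ← coe_biUnion, ← coe_biUnion]
  have h_sup : span F ((X ⊔ Y).biUnion A : Set V)
      = span F (X.biUnion A : Set V) ⊔ span F (Y.biUnion A : Set V) := by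
    rw [sup_eq_union, union_biUnion, coe_union, span_union]
  have h_inf : span F ((X ⊓ Y).biUnion A : Set V)
      ≤ span F (X.biUnion A : Set V) ⊓ span F (Y.biUnion A : Set V) :=
    le_inf (span_mono (by gcongr; exact inter_subset_left))
      (span_mono (by gcongr; exact inter_subset_right))
  have h_grassmann := finrank_sup_add_finrank_inf_eq
    (span F (X.biUnion A : Set V)) (span F (Y.biUnion A : Set V))
  have h_le := Submodule.finrank_mono h_inf
  rw [h_sup]
  omega

theorem Fin.sum_filter_le_sub {G : Type*} [AddCommGroup G] {m : ℕ} (g : ℕ → G) (t : Fin m) :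
    ∑ s ∈ univ.filter (t ≤ ·), (g (s + 1) - g s) = g m - g t := by
  calc ∑ s ∈ univ.filter (t ≤ ·), (g (s + 1) - g s)
      = ∑ i ∈ (Ici t).map Fin.valEmbedding, (g (i + 1) - g i) := by
        rw [sum_map, filter_le_eq_Ici]; rfl
    _ = g m - g t := by rw [Fin.map_valEmbedding_Ici, sum_Ico_sub _ t.is_le']

theorem Fin.sum_univ_sub {G : Type*} [AddCommGroup G] {m : ℕ} (g : ℕ → G) :
    ∑ s : Fin m, (g (s + 1) - g s) = g m - g 0 := by
  rw [Fin.sum_univ_eq_sum_range (fun i => g (i + 1) - g i), sum_range_sub]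

section Chain

variable {α : Type*} [DecidableEq α] {m : ℕ} (σ : Fin m ≃ α)

def chainPrefix (k : ℕ) : Finset α :=
  (univ.filter fun r : Fin m => (r : ℕ) < k).image σ

@[simp]
theorem chainPrefix_zero : chainPrefix σ 0 = ∅ := by
  simp [chainPrefix]

theorem chainPrefix_of_le [Fintype α] {k : ℕ} (hk : m ≤ k) : chainPrefix σ k = univ := by
  rw [chainPrefix, filter_true_of_mem fun r _ => r.is_lt.trans_le hk, image_univ_equiv]

theorem chainPrefix_succ (t : Fin m) :
    chainPrefix σ (t + 1) = insert (σ t) (chainPrefix σ t) := by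
  have h : univ.filter (fun r : Fin m => (r : ℕ) < t + 1)
      = insert t (univ.filter fun r : Fin m => (r : ℕ) < t) := by
    ext r
    simp only [mem_filter, mem_univ, true_and, mem_insert, Fin.ext_iff]
    omega
  rw [chainPrefix, h, image_insert]
  rfl

theorem apply_notMem_chainPrefix (t : Fin m) : σ t ∉ chainPrefix σ t := by
  simp [chainPrefix]

theorem image_filter_lt_eq_chainPrefix (t : Fin m) :
    (univ.filter (· < t)).image σ = chainPrefix σ t := by
  simp only [chainPrefix, Fin.lt_def]

theorem image_filter_le_eq_chainPrefix (t : Fin m) :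
    (univ.filter (· ≤ t)).image σ = chainPrefix σ (t + 1) := by
  simp only [chainPrefix, Fin.le_def, Nat.lt_succ_iff]

theorem IsSubmodular.sub_le_sub_insert {G : Type*} [AddCommGroup G] [PartialOrder G]
    [IsOrderedAddMonoid G] {f : Finset α → G} (hf : IsSubmodular f) {X Y : Finset α}
    (hXY : X ⊆ Y) {a : α} (ha : a ∉ Y) : f (insert a Y) - f Y ≤ f (insert a X) - f X := by
  have h := hf (insert a X) Y
  rw [sup_eq_union, inf_eq_inter, insert_union, union_eq_right.2 hXY,
    insert_inter_of_notMem ha, inter_eq_left.2 hXY] at h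
  rw [sub_le_sub_iff]
  simpa [add_comm] using h

theorem IsSubmodular.sub_le_sum_chainPrefix [Fintype α] {G : Type*} [AddCommGroup G]
    [PartialOrder G] [IsOrderedAddMonoid G] {f : Finset α → G} (hf : IsSubmodular f)
    (S : Finset α) :
    f univ - f (univ \ S) ≤
      ∑ i ∈ S, (f (chainPrefix σ (σ.symm i + 1)) - f (chainPrefix σ (σ.symm i))) := by
  set g : ℕ → G := fun k => f ((univ \ S) ∪ chainPrefix σ k)
  have h_step : ∀ t : Fin m, g (t + 1) - g t ≤
      if σ t ∈ S then f (chainPrefix σ (t + 1)) - f (chainPrefix σ t) else 0 := by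
    intro t
    simp only [g, chainPrefix_succ, union_insert]
    split_ifs with ht
    · exact hf.sub_le_sub_insert subset_union_right
        (by simp [ht, apply_notMem_chainPrefix])
    · rw [insert_eq_of_mem (by simp [ht]), sub_self]
  calc f univ - f (univ \ S) = ∑ t : Fin m, (g (t + 1) - g t) := by
        simp [Fin.sum_univ_sub g, g, chainPrefix_of_le σ le_rfl, union_eq_right.2 (subset_univ _)]
    _ ≤ _ := sum_le_sum fun t _ => h_step t
    _ = _ := by
        rw [← sum_filter]
        exact sum_equiv σ (by simp) (by simp)

end Chain

theorem stmt_14_general {F V : Type*} [Field F] [AddCommGroup V] [Module F V]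
    {m : ℕ} [NeZero m] (A : Fin m → Finset V)
    (rank : Finset (Fin m) → ℤ)
    (hrank : ∀ S : Finset (Fin m),
      rank S = (Module.finrank F
        (Submodule.span F (⋃ i ∈ (S : Set (Fin m)), (A i : Set V))) : ℤ))
    (N : ℤ) (hN : N = rank Finset.univ)
    (u : Fin m) (σ : Equiv.Perm (Fin m)) (hσ : σ 0 = u)
    (R : Fin m → ℤ)
    (hR : ∀ t : Fin m, t ≠ 0 →
      R (σ t) = rank ((Finset.univ.filter (· ≤ t)).image σ)
        - rank ((Finset.univ.filter (· < t)).image σ)) :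
    (∀ t : Fin m, t ≠ 0 →
      ∑ s ∈ Finset.univ.filter (t ≤ ·), R (σ s)
        = N - rank ((Finset.univ.filter (· < t)).image σ)) ∧
    (∀ S : Finset (Fin m), u ∉ S →
      N - rank (Finset.univ \ S) ≤ ∑ i ∈ S, R i) := by
  have hR' : ∀ t : Fin m, t ≠ 0 →
      R (σ t) = rank (chainPrefix σ (t + 1)) - rank (chainPrefix σ t) := by
    intro t ht
    rw [hR t ht, image_filter_le_eq_chainPrefix, image_filter_lt_eq_chainPrefix]
  refine ⟨fun t ht => ?_, fun S hS => ?_⟩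
  · calc ∑ s ∈ univ.filter (t ≤ ·), R (σ s)
        = ∑ s ∈ univ.filter (t ≤ ·), (rank (chainPrefix σ (s + 1)) - rank (chainPrefix σ s)) :=
          sum_congr rfl fun s hs =>
            hR' s (Fin.pos_iff_ne_zero.2 ht |>.trans_le (mem_filter.1 hs).2).ne'
      _ = N - rank ((univ.filter (· < t)).image σ) := by
          rw [Fin.sum_filter_le_sub (fun k => rank (chainPrefix σ k)),
            chainPrefix_of_le σ le_rfl, hN, image_filter_lt_eq_chainPrefix]
  · have hsub : IsSubmodular rank := by
      rw [funext hrank]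
      exact isSubmodular_finrank_span_biUnion A
    calc N - rank (univ \ S)
        ≤ ∑ i ∈ S, (rank (chainPrefix σ (σ.symm i + 1)) - rank (chainPrefix σ (σ.symm i))) :=
          hN ▸ hsub.sub_le_sum_chainPrefix σ S
      _ = ∑ i ∈ S, R i := sum_congr rfl fun i _ => by
          rw [← hR' _ fun h => hS (by rwa [← hσ, ← h, Equiv.apply_symm_apply]),
            Equiv.apply_symm_apply]

/-- chain-telescoping achievability: the rate vector defined by
rank differences along a chain starting at a fixed user `u = σ 0` satisfies
the telescoping identities and all cut-set constraints for sets avoiding `u`. -/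
theorem stmt_14 {F V : Type*} [Field F] [AddCommGroup V] [Module F V]
    [FiniteDimensional F V] {m : ℕ} [NeZero m] (A : Fin m → Finset V)
    (rank : Finset (Fin m) → ℤ)
    (hrank : ∀ S : Finset (Fin m),
      rank S = (Module.finrank F
        (Submodule.span F (⋃ i ∈ (S : Set (Fin m)), (A i : Set V))) : ℤ))
    (N : ℤ) (hN : N = rank Finset.univ)
    (u : Fin m) (σ : Equiv.Perm (Fin m)) (hσ : σ 0 = u)
    (R : Fin m → ℤ)
    (hR : ∀ t : Fin m, t ≠ 0 →
      R (σ t) = rank ((Finset.univ.filter (· ≤ t)).image σ)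
        - rank ((Finset.univ.filter (· < t)).image σ)) :
    (∀ t : Fin m, t ≠ 0 →
      ∑ s ∈ Finset.univ.filter (t ≤ ·), R (σ s)
        = N - rank ((Finset.univ.filter (· < t)).image σ)) ∧
    (∀ S : Finset (Fin m), u ∉ S →
      N - rank (Finset.univ \ S) ≤ ∑ i ∈ S, R i) :=
  stmt_14_general A rank hrank N hN u σ hσ R hR
end
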